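/- Let F_β : ℝ → [0,1] be a cumulative distribution function satisfying F_β(-(β/(1-β))(x^{β-1} - (1-x)^{β-1})) = x for all x ∈ (0,1), where β ∈ (0,1). Then the limit as z → ∞ of z·f(z)/(1-F_β(z)) equals 1/(1-β), where f is the density (derivative of F_β). -/

import Mathlib

/-!
`F` is the inverse of the quantile function `c`, so `F' = 1 / c' ∘ F`, and at `x = F z` the ratio
`z F'(z) / (1 - F z)` equals `c x / (c' x (1 - x))`. As `z → ∞`, `x → 1⁻`, where both
`c x ~ β / (1 - β) (1 - x) ^ (β - 1)` and `c' x (1 - x) ~ β (1 - x) ^ (β - 1)`.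
-/

open Real Filter Set Topology

lemma tendsto_sub_left_nhdsLT (a : ℝ) : Tendsto (a - ·) (𝓝[<] a) (𝓝[>] 0) := by
  have h := (continuous_sub_left a).continuousWithinAt.tendsto_nhdsWithin
    (s := Iio a) (x := a) (t := Ioi 0) fun x hx => sub_pos.2 hx
  rwa [sub_self] at h

section Inverse

variable {c F : ℝ → ℝ}

lemma deriv_eq_inv_of_leftInverse {c' z : ℝ} (hc : HasDerivAt c c' (F z))
    (hF : DifferentiableAt ℝ F z) (hcF : Function.LeftInverse c F) : deriv F z = c'⁻¹ := by
  have hcomp := hc.comp z hF.hasDerivAt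
  rw [show c ∘ F = id from funext hcF] at hcomp
  exact eq_inv_of_mul_eq_one_right (hcomp.unique (hasDerivAt_id z))

lemma tendsto_atTop_nhdsLT_of_leftInverse {a b : ℝ} (hc : StrictMonoOn c (Ioo a b))
    (hF : ∀ z, F z ∈ Ioo a b) (hcF : Function.LeftInverse c F) (hFc : LeftInvOn F c (Ioo a b)) :
    Tendsto F atTop (𝓝[<] b) := by
  have hmono : Monotone F := fun z w hzw => by
    rwa [← hc.le_iff_le (hF z) (hF w), hcF, hcF]
  have hrange : range F = Ioo a b :=
    (range_subset_iff.2 hF).antisymm fun x hx => ⟨c x, hFc hx⟩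
  have hab : a < b := (hF 0).1.trans (hF 0).2
  refine tendsto_nhdsWithin_of_tendsto_nhds_of_eventually_within _ ?_
    (Eventually.of_forall fun z => (hF z).2)
  exact tendsto_atTop_isLUB hmono (hrange ▸ isLUB_Ioo hab)

end Inverse

noncomputable def tsallisQuantile (β x : ℝ) : ℝ :=
  -(β / (1 - β)) * (x ^ (β - 1) - (1 - x) ^ (β - 1))

noncomputable def tsallisQuantileDeriv (β x : ℝ) : ℝ :=
  β * (x ^ (β - 2) + (1 - x) ^ (β - 2))

section Tsallis

variable {β x : ℝ}

lemma hasDerivAt_tsallisQuantile (hβ : β ≠ 1) (hx : x ∈ Ioo 0 1) :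
    HasDerivAt (tsallisQuantile β) (tsallisQuantileDeriv β x) x := by
  have hx1 : 1 - x ≠ 0 := by linarith [hx.2]
  have hleft := Real.hasDerivAt_rpow_const (p := β - 1) (Or.inl hx.1.ne')
  have hright := (Real.hasDerivAt_rpow_const (p := β - 1) (Or.inl hx1)).comp x
    ((hasDerivAt_id x).const_sub 1)
  refine ((hleft.sub hright).const_mul (-(β / (1 - β)))).congr_deriv ?_
  have : 1 - β ≠ 0 := sub_ne_zero.2 (Ne.symm hβ)
  rw [tsallisQuantileDeriv, show β - 1 - 1 = β - 2 by ring]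
  field_simp
  ring

lemma tsallisQuantileDeriv_pos (hβ : 0 < β) (hx : x ∈ Ioo 0 1) : 0 < tsallisQuantileDeriv β x :=
  mul_pos hβ (add_pos (rpow_pos_of_pos hx.1 _) (rpow_pos_of_pos (sub_pos.2 hx.2) _))

lemma continuousOn_tsallisQuantile (hβ : β ≠ 1) : ContinuousOn (tsallisQuantile β) (Ioo 0 1) :=
  fun _ hx => (hasDerivAt_tsallisQuantile hβ hx).continuousAt.continuousWithinAt

lemma strictMonoOn_tsallisQuantile (hβ0 : 0 < β) (hβ1 : β ≠ 1) :
    StrictMonoOn (tsallisQuantile β) (Ioo 0 1) := by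
  refine strictMonoOn_of_deriv_pos (convex_Ioo 0 1) (continuousOn_tsallisQuantile hβ1) ?_
  intro x hx
  rw [interior_Ioo] at hx
  rw [(hasDerivAt_tsallisQuantile hβ1 hx).deriv]
  exact tsallisQuantileDeriv_pos hβ0 hx

lemma tendsto_tsallisQuantile_nhdsGT_zero (hβ : β ∈ Ioo 0 1) :
    Tendsto (tsallisQuantile β) (𝓝[>] 0) atBot := by
  have hpole : Tendsto (fun x : ℝ => x ^ (β - 1)) (𝓝[>] 0) atTop :=
    tendsto_rpow_neg_nhdsGT_zero (by linarith [hβ.2])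
  have hregular : Tendsto (fun x : ℝ => -(1 - x) ^ (β - 1)) (𝓝[>] 0) (𝓝 (-1)) := by
    have := (((continuous_sub_left (1 : ℝ)).continuousAt (x := 0)).rpow_const
      (p := β - 1) (Or.inl (by norm_num))).tendsto
    simpa using (this.mono_left nhdsWithin_le_nhds).neg
  have hneg : -(β / (1 - β)) < 0 := neg_neg_of_pos (div_pos hβ.1 (by linarith [hβ.2]))
  refine ((hpole.atTop_add hregular).const_mul_atTop_of_neg hneg).congr fun x => ?_
  simp only [tsallisQuantile, sub_eq_add_neg]

lemma tendsto_tsallisQuantile_nhdsLT_one (hβ : β ∈ Ioo 0 1) :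
    Tendsto (tsallisQuantile β) (𝓝[<] 1) atTop := by
  have hpole : Tendsto (fun x : ℝ => (1 - x) ^ (β - 1)) (𝓝[<] 1) atTop :=
    (tendsto_rpow_neg_nhdsGT_zero (by linarith [hβ.2])).comp (tendsto_sub_left_nhdsLT 1)
  have hregular : Tendsto (fun x : ℝ => -x ^ (β - 1)) (𝓝[<] 1) (𝓝 (-1)) := by
    have := (continuousAt_id.rpow_const (p := β - 1) (Or.inl one_ne_zero)).tendsto
    simpa using (this.mono_left nhdsWithin_le_nhds).neg
  have hpos : 0 < β / (1 - β) := div_pos hβ.1 (by linarith [hβ.2])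
  refine ((hpole.atTop_add hregular).const_mul_atTop hpos).congr fun x => ?_
  simp only [tsallisQuantile]
  ring

lemma surjOn_tsallisQuantile (hβ : β ∈ Ioo 0 1) : SurjOn (tsallisQuantile β) (Ioo 0 1) univ :=
  (continuousOn_tsallisQuantile hβ.2.ne).surjOn_of_tendsto (nonempty_Ioo.2 zero_lt_one)
    ((tendsto_comp_coe_Ioo_atBot zero_lt_one).2 (tendsto_tsallisQuantile_nhdsGT_zero hβ))
    ((tendsto_comp_coe_Ioo_atTop zero_lt_one).2 (tendsto_tsallisQuantile_nhdsLT_one hβ))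

-- Multiplying numerator and denominator by `(1 - x) ^ (1 - β)` removes the pole at `x = 1`.
lemma tsallisQuantile_div_eq (hx : x < 1) :
    tsallisQuantile β x / (tsallisQuantileDeriv β x * (1 - x)) =
      β / (1 - β) * (1 - x ^ (β - 1) * (1 - x) ^ (1 - β)) /
        (β * (x ^ (β - 2) * (1 - x) ^ (2 - β) + 1)) := by
  have ht : 0 < 1 - x := sub_pos.2 hx
  have e1 : (1 - x) ^ (1 - β) = ((1 - x) ^ (β - 1))⁻¹ := by
    rw [← rpow_neg ht.le, neg_sub]
  have e2 : (1 - x) ^ (β - 2) = (1 - x) ^ (β - 1) / (1 - x) := by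
    rw [← rpow_sub_one ht.ne']
    ring_nf
  have e3 : (1 - x) ^ (2 - β) = (1 - x) / (1 - x) ^ (β - 1) := by
    rw [show 2 - β = 1 - (β - 1) by ring, rpow_sub ht, rpow_one]
  rw [tsallisQuantile, tsallisQuantileDeriv, e1, e2, e3]
  field_simp
  ring

lemma tendsto_tsallisQuantile_div (hβ : β ∈ Ioo 0 1) :
    Tendsto (fun x => tsallisQuantile β x / (tsallisQuantileDeriv β x * (1 - x))) (𝓝[<] 1)
      (𝓝 (1 / (1 - β))) := by
  obtain ⟨hβ0, hβ1⟩ := hβ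
  have h1β : (1 : ℝ) - β ≠ 0 := by linarith
  have h2β : (2 : ℝ) - β ≠ 0 := by linarith
  have hcont : ContinuousAt (fun x : ℝ => β / (1 - β) * (1 - x ^ (β - 1) * (1 - x) ^ (1 - β)) /
      (β * (x ^ (β - 2) * (1 - x) ^ (2 - β) + 1))) 1 := by
    fun_prop (disch := first
      | exact Or.inr (by linarith)
      | exact Or.inl (by norm_num)
      | simpa [zero_rpow h2β] using hβ0.ne')
  have hlim := hcont.tendsto.mono_left (nhdsWithin_le_nhds (s := Iio 1))
  rw [sub_self, zero_rpow h1β, zero_rpow h2β] at hlim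
  refine (hlim.congr' ?_).trans_eq ?_
  · filter_upwards [self_mem_nhdsWithin] with x hx
    exact (tsallisQuantile_div_eq hx).symm
  · field_simp
    simp

end Tsallis

theorem stmt2 (β : ℝ) (hβ : β ∈ Set.Ioo (0 : ℝ) 1) (F : ℝ → ℝ)
    (hquant : ∀ x ∈ Set.Ioo (0 : ℝ) 1,
      F (-(β / (1 - β)) * (x ^ (β - 1) - (1 - x) ^ (β - 1))) = x)
    (hdiff : Differentiable ℝ F) :
    Tendsto (fun z : ℝ => z * deriv F z / (1 - F z)) atTop (nhds (1 / (1 - β))) := by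
  have hFc : LeftInvOn F (tsallisQuantile β) (Ioo 0 1) := hquant
  have hsurj := surjOn_tsallisQuantile hβ
  have hF : ∀ z, F z ∈ Ioo 0 1 := fun z => hFc.mapsTo hsurj (mem_univ z)
  have hcF : Function.LeftInverse (tsallisQuantile β) F := fun z =>
    hFc.rightInvOn_image (univ_subset_iff.1 hsurj ▸ mem_univ z)
  have hFlim := tendsto_atTop_nhdsLT_of_leftInverse
    (strictMonoOn_tsallisQuantile hβ.1 hβ.2.ne) hF hcF hFc
  refine ((tendsto_tsallisQuantile_div hβ).comp hFlim).congr fun z => ?_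
  rw [Function.comp_apply, deriv_eq_inv_of_leftInverse
    (hasDerivAt_tsallisQuantile hβ.2.ne (hF z)) (hdiff z) hcF, hcF z,
    div_mul_eq_div_div, div_eq_mul_inv z]
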